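/- arXiv:2112.08257 — 2 statements merged into one kernel-verified Lean document; each statement's English description precedes it below -/
import Mathlib

section
/- The number of strictly increasing integer sequences 0 ≤ n_1 < n_2 < ... < n_{2k-1} ≤ N-1 whose alternating sum n_{2k-1} - n_{2k-2} + n_{2k-3} - ... - n_2 + n_1 equals l is the product of binomial coefficients C(l, k-1) · C(N-l-1, k-1). -/
/-!
Write `S t` for the alternating partial sums `n₀ - n₁ + ⋯ ± n_{t-1}` of a tuple `n₀ < ⋯ < n_{2m}`
(so `2k - 1 = 2m + 1`). The sequences `aᵢ = S (2i+1)` and `cᵢ = -S (2i)`, `0 ≤ i ≤ m`, recover the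
tuple as `n_{2i} = aᵢ + cᵢ`, `n_{2i+1} = aᵢ + c_{i+1}`, and `n` is strictly increasing iff both `a`
and `c` are. As `a_m = l`, `c₀ = 0` and `n_{2m} = l + c_m`, the tuples counted correspond exactly
to pairs of strictly increasing sequences `a₀ < ⋯ < a_{m-1}` in `[0, l)` and
`c₁ - 1 < ⋯ < c_m - 1` in `[0, N - l - 1)`.
-/

open Finset

theorem card_filter_strictMono (a b : ℕ) :
    #{f : Fin a → Fin b | StrictMono f} = b.choose a := by
  let e : {f : Fin a → Fin b // StrictMono f} ≃ (Fin a ↪o Fin b) :=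
    { toFun := fun f => OrderEmbedding.ofStrictMono f.1 f.2
      invFun := fun e => ⟨e, e.strictMono⟩
      left_inv := fun _ => rfl
      right_inv := fun _ => rfl }
  rw [← Fintype.card_subtype, ← Nat.card_eq_fintype_card,
    Nat.card_congr (e.trans Set.powersetCard.ofFinEmbEquiv), Set.powersetCard.card, Nat.card_fin]

def altPartialSum (u : ℕ → ℤ) (t : ℕ) : ℤ := ∑ j ∈ range t, (-1) ^ j * u j

def interleave (a c : ℕ → ℤ) (j : ℕ) : ℤ := a (j / 2) + c ((j + 1) / 2)

section Sequences

variable (u : ℕ → ℤ) (a c : ℕ → ℤ) (i : ℕ)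

@[simp] lemma altPartialSum_zero : altPartialSum u 0 = 0 := by simp [altPartialSum]

lemma altPartialSum_succ (t : ℕ) :
    altPartialSum u (t + 1) = altPartialSum u t + (-1) ^ t * u t :=
  sum_range_succ _ t

lemma altPartialSum_two_mul_add_one :
    altPartialSum u (2 * i + 1) = altPartialSum u (2 * i) + u (2 * i) := by
  rw [altPartialSum_succ, Even.neg_one_pow ⟨i, two_mul i⟩, one_mul]

lemma altPartialSum_two_mul_add_two :
    altPartialSum u (2 * i + 2) = altPartialSum u (2 * i + 1) - u (2 * i + 1) := by
  rw [altPartialSum_succ, Odd.neg_one_pow ⟨i, rfl⟩, neg_one_mul, sub_eq_add_neg]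

lemma altPartialSum_congr {u v : ℕ → ℤ} {t : ℕ} (h : ∀ j < t, u j = v j) :
    altPartialSum u t = altPartialSum v t :=
  sum_congr rfl fun j hj => by rw [h j (mem_range.mp hj)]

@[simp] lemma interleave_two_mul : interleave a c (2 * i) = a i + c i := by
  rw [interleave, show 2 * i / 2 = i by omega, show (2 * i + 1) / 2 = i by omega]

@[simp] lemma interleave_two_mul_add_one : interleave a c (2 * i + 1) = a i + c (i + 1) := by
  rw [interleave, show (2 * i + 1) / 2 = i by omega, show (2 * i + 1 + 1) / 2 = i + 1 by omega]

lemma altPartialSum_interleave_two_mul :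
    altPartialSum (interleave a c) (2 * i) = c 0 - c i := by
  induction i with
  | zero => simp
  | succ i ih =>
    rw [mul_add, mul_one, altPartialSum_two_mul_add_two, altPartialSum_two_mul_add_one, ih,
      interleave_two_mul, interleave_two_mul_add_one]
    ring

lemma altPartialSum_interleave_two_mul_add_one :
    altPartialSum (interleave a c) (2 * i + 1) = a i + c 0 := by
  rw [altPartialSum_two_mul_add_one, altPartialSum_interleave_two_mul, interleave_two_mul]
  ring

lemma interleave_altPartialSum :
    interleave (fun i => altPartialSum u (2 * i + 1)) (fun i => -altPartialSum u (2 * i)) = u := by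
  funext j
  obtain ⟨i, rfl | rfl⟩ := Nat.even_or_odd' j
  · simp [altPartialSum_two_mul_add_one]
  · simp [altPartialSum_two_mul_add_two, mul_add]

lemma interleave_lt_succ_iff (m : ℕ) :
    (∀ j < 2 * m, interleave a c j < interleave a c (j + 1)) ↔
      (∀ i < m, a i < a (i + 1)) ∧ ∀ i < m, c i < c (i + 1) := by
  constructor
  · intro h
    refine ⟨fun i hi => ?_, fun i hi => ?_⟩
    · simpa [show 2 * i + 1 + 1 = 2 * (i + 1) by ring] using h (2 * i + 1) (by omega)
    · simpa using h (2 * i) (by omega)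
  · rintro ⟨ha, hc⟩ j hj
    obtain ⟨i, rfl | rfl⟩ := Nat.even_or_odd' j
    · simpa using hc i (by omega)
    · simpa [show 2 * i + 1 + 1 = 2 * (i + 1) by ring] using ha i (by omega)

end Sequences

section Tuples

variable {n N : ℕ}

def toSeq (f : Fin n → Fin N) (j : ℕ) : ℤ := if h : j < n then ((f ⟨j, h⟩ : ℕ) : ℤ) else 0

lemma toSeq_of_lt (f : Fin n → Fin N) {j : ℕ} (h : j < n) : toSeq f j = (f ⟨j, h⟩ : ℕ) :=
  dif_pos h

lemma sum_eq_altPartialSum_toSeq (f : Fin n → Fin N) :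
    ∑ j : Fin n, (-1 : ℤ) ^ (j : ℕ) * ((f j : ℕ) : ℤ) = altPartialSum (toSeq f) n := by
  rw [altPartialSum, ← Fin.sum_univ_eq_sum_range]
  simp [toSeq_of_lt]

lemma StrictMono.toSeq_lt_succ {f : Fin n → Fin N} (hf : StrictMono f) {j : ℕ} (hj : j + 1 < n) :
    toSeq f j < toSeq f (j + 1) := by
  rw [toSeq_of_lt f (by omega), toSeq_of_lt f hj, Nat.cast_lt, ← Fin.lt_def]
  exact hf (Fin.mk_lt_mk.mpr j.lt_succ_self)

lemma StrictMono.strictMonoOn_altPartialSum {m : ℕ} {f : Fin (2 * m + 1) → Fin N}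
    (hf : StrictMono f) :
    StrictMonoOn (fun i => altPartialSum (toSeq f) (2 * i + 1)) (Set.Iic m) ∧
      StrictMonoOn (fun i => -altPartialSum (toSeq f) (2 * i)) (Set.Iic m) := by
  have hsteps := (interleave_lt_succ_iff (fun i => altPartialSum (toSeq f) (2 * i + 1))
    (fun i => -altPartialSum (toSeq f) (2 * i)) m).mp <| by
    rw [interleave_altPartialSum]
    exact fun j hj => hf.toSeq_lt_succ (by omega)
  exact ⟨strictMonoOn_Iic_of_lt_succ (by simpa using hsteps.1),
    strictMonoOn_Iic_of_lt_succ (by simpa using hsteps.2)⟩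

end Tuples

section Builder

variable {m l L N : ℕ}

-- `snocSeq g` and `consSeq h` are the sequences `a` and `c` of the header; only their values
-- at `0, …, m` matter.
def snocSeq (g : Fin m → Fin l) (i : ℕ) : ℤ := if h : i < m then (g ⟨i, h⟩ : ℕ) else l

def consSeq (h : Fin m → Fin L) : ℕ → ℤ
  | 0 => 0
  | i + 1 => if hi : i < m then (h ⟨i, hi⟩ : ℕ) + 1 else L

lemma snocSeq_mem_Icc (g : Fin m → Fin l) (i : ℕ) : snocSeq g i ∈ Set.Icc (0 : ℤ) l := by
  unfold snocSeq
  split_ifs <;> simp [(g _).isLt.le]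

lemma consSeq_mem_Icc (h : Fin m → Fin L) (i : ℕ) : consSeq h i ∈ Set.Icc (0 : ℤ) L := by
  cases i with
  | zero => simp [consSeq]
  | succ i =>
    simp only [consSeq]
    split_ifs
    · simp only [Set.mem_Icc, Order.add_one_le_iff, Nat.cast_lt, Fin.is_lt, and_true]
      positivity
    · simp

lemma snocSeq_lt_succ {g : Fin m → Fin l} (hg : StrictMono g) {i : ℕ} (hi : i < m) :
    snocSeq g i < snocSeq g (i + 1) := by
  unfold snocSeq
  split_ifs
  · exact Nat.cast_lt.mpr (hg (Fin.mk_lt_mk.mpr i.lt_succ_self))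
  · exact Nat.cast_lt.mpr (g _).isLt

lemma consSeq_lt_succ {h : Fin m → Fin L} (hh : StrictMono h) {i : ℕ} (hi : i < m) :
    consSeq h i < consSeq h (i + 1) := by
  cases i with
  | zero => simp [consSeq, hi]
  | succ i =>
    simp only [consSeq, hi, Nat.lt_of_succ_lt hi, dif_pos]
    exact add_lt_add_left (Nat.cast_lt.mpr (hh (Fin.mk_lt_mk.mpr i.lt_succ_self))) 1

lemma interleave_snocSeq_consSeq_mem_Icc (g : Fin m → Fin l) (h : Fin m → Fin (N - l - 1))
    (j : ℕ) : interleave (snocSeq g) (consSeq h) j ∈ Set.Icc (0 : ℤ) ((N - l - 1 : ℕ) + l) := by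
  obtain ⟨ha₀, ha₁⟩ := snocSeq_mem_Icc g (j / 2)
  obtain ⟨hc₀, hc₁⟩ := consSeq_mem_Icc h ((j + 1) / 2)
  simp only [interleave, Set.mem_Icc]
  omega

def interleaveTuple (hlN : l < N) (p : (Fin m → Fin l) × (Fin m → Fin (N - l - 1))) :
    Fin (2 * m + 1) → Fin N := fun j =>
  ⟨(interleave (snocSeq p.1) (consSeq p.2) j).toNat, by
    have := interleave_snocSeq_consSeq_mem_Icc p.1 p.2 j
    simp only [Set.mem_Icc] at this
    omega⟩

variable (hlN : l < N) (p : (Fin m → Fin l) × (Fin m → Fin (N - l - 1)))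

lemma toSeq_interleaveTuple {j : ℕ} (hj : j < 2 * m + 1) :
    toSeq (interleaveTuple hlN p) j = interleave (snocSeq p.1) (consSeq p.2) j := by
  rw [toSeq_of_lt _ hj, interleaveTuple, Int.toNat_of_nonneg
    (interleave_snocSeq_consSeq_mem_Icc p.1 p.2 j).1]

lemma altPartialSum_interleaveTuple {i : ℕ} (hi : i ≤ m) :
    altPartialSum (toSeq (interleaveTuple hlN p)) (2 * i + 1) = snocSeq p.1 i ∧
      altPartialSum (toSeq (interleaveTuple hlN p)) (2 * i) = -consSeq p.2 i := by
  rw [altPartialSum_congr fun j hj => toSeq_interleaveTuple hlN p (by omega : j < 2 * m + 1),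
    altPartialSum_congr fun j hj => toSeq_interleaveTuple hlN p (by omega : j < 2 * m + 1),
    altPartialSum_interleave_two_mul_add_one, altPartialSum_interleave_two_mul]
  simp [consSeq]

lemma interleaveTuple_injective : Function.Injective (interleaveTuple (m := m) hlN) := by
  intro p q hpq
  have hsums (i : ℕ) (hi : i ≤ m) := altPartialSum_interleaveTuple hlN p hi
  have hsums' (i : ℕ) (hi : i ≤ m) := altPartialSum_interleaveTuple hlN q hi
  rw [hpq] at hsums
  refine Prod.ext (funext fun t => Fin.ext ?_) (funext fun t => Fin.ext ?_)
  · have := (hsums t t.isLt.le).1.symm.trans (hsums' t t.isLt.le).1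
    simpa [snocSeq] using this
  · have := (hsums (t + 1) t.isLt).2.symm.trans (hsums' (t + 1) t.isLt).2
    simpa [consSeq] using this

lemma strictMono_interleaveTuple (hg : StrictMono p.1) (hh : StrictMono p.2) :
    StrictMono (interleaveTuple hlN p) := by
  have hsteps := (interleave_lt_succ_iff (snocSeq p.1) (consSeq p.2) m).mpr
    ⟨fun i hi => snocSeq_lt_succ hg hi, fun i hi => consSeq_lt_succ hh hi⟩
  refine Fin.strictMono_iff_lt_succ.mpr fun j => ?_
  have := hsteps j (by omega)
  rw [← toSeq_interleaveTuple hlN p (by omega), ← toSeq_interleaveTuple hlN p (by omega),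
    toSeq_of_lt _ (by omega), toSeq_of_lt _ (by omega), Nat.cast_lt] at this
  exact this

lemma altPartialSum_interleaveTuple_eq :
    altPartialSum (toSeq (interleaveTuple hlN p)) (2 * m + 1) = l := by
  simp [(altPartialSum_interleaveTuple hlN p le_rfl).1, snocSeq]

end Builder

section Decomposition

variable {m l N : ℕ} {f : Fin (2 * m + 1) → Fin N} (hf : StrictMono f)
  (hsum : altPartialSum (toSeq f) (2 * m + 1) = l)
include hf hsum

lemma altPartialSum_odd_mem_Ico {i : ℕ} (hi : i < m) :
    altPartialSum (toSeq f) (2 * i + 1) ∈ Set.Ico (0 : ℤ) l := by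
  have hmono := hf.strictMonoOn_altPartialSum.1
  have h₀ : 0 ≤ altPartialSum (toSeq f) (2 * 0 + 1) := by
    rw [altPartialSum_two_mul_add_one, toSeq_of_lt f (by omega)]
    simp
  refine ⟨h₀.trans (hmono.monotoneOn (by simp) (by simp; omega) (Nat.zero_le i)), ?_⟩
  rw [← hsum]
  exact hmono (by simp; omega) (by simp) hi

lemma neg_altPartialSum_even_mem_Ioo {i : ℕ} (hi : i < m) :
    -altPartialSum (toSeq f) (2 * (i + 1)) ∈ Set.Ioo (0 : ℤ) (N - l) := by
  have hmono := hf.strictMonoOn_altPartialSum.2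
  have hlast : -altPartialSum (toSeq f) (2 * m) < N - l := by
    have := altPartialSum_two_mul_add_one (toSeq f) m
    rw [toSeq_of_lt f (by omega)] at this
    have := (f ⟨2 * m, by omega⟩).isLt
    omega
  refine ⟨?_, ?_⟩
  · simpa using hmono (by simp) (by simp; omega) (Nat.succ_pos i)
  · exact (hmono.monotoneOn (by simp; omega) (by simp) hi).trans_lt hlast

lemma exists_interleaveTuple_eq (hlN : l < N) :
    ∃ p : (Fin m → Fin l) × (Fin m → Fin (N - l - 1)),
      StrictMono p.1 ∧ StrictMono p.2 ∧ interleaveTuple hlN p = f := by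
  obtain ⟨ha, hc⟩ := hf.strictMonoOn_altPartialSum
  have ha_mem (t : Fin m) := altPartialSum_odd_mem_Ico hf hsum t.isLt
  have hc_mem (t : Fin m) := neg_altPartialSum_even_mem_Ioo hf hsum t.isLt
  simp only [Set.mem_Ico, Set.mem_Ioo] at ha_mem hc_mem
  let g : Fin m → Fin l := fun t =>
    ⟨(altPartialSum (toSeq f) (2 * t + 1)).toNat, by have := ha_mem t; omega⟩
  let h : Fin m → Fin (N - l - 1) := fun t =>
    ⟨(-altPartialSum (toSeq f) (2 * (t + 1)) - 1).toNat, by have := hc_mem t; omega⟩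
  have hg : StrictMono g := fun s t hst => by
    have hlt := ha (Set.mem_Iic.mpr s.isLt.le) (Set.mem_Iic.mpr t.isLt.le) hst
    have := ha_mem s
    simp only [g, Fin.mk_lt_mk] at hlt ⊢
    omega
  have hh : StrictMono h := fun s t hst => by
    have hlt := hc (Set.mem_Iic.mpr s.isLt) (Set.mem_Iic.mpr t.isLt) (Nat.add_lt_add_right hst 1)
    have := hc_mem s
    simp only [h, Fin.mk_lt_mk, Nat.succ_eq_add_one] at hlt ⊢
    omega
  have hsnoc (i : ℕ) (hi : i ≤ m) : snocSeq g i = altPartialSum (toSeq f) (2 * i + 1) := by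
    unfold snocSeq
    split_ifs with him
    · have := ha_mem ⟨i, him⟩
      simp only [g] at this ⊢
      omega
    · rw [show i = m by omega, ← hsum]
  have hcons (i : ℕ) (hi : i ≤ m) : consSeq h i = -altPartialSum (toSeq f) (2 * i) := by
    cases i with
    | zero => simp [consSeq]
    | succ i =>
      have := hc_mem ⟨i, by omega⟩
      simp only [consSeq, show i < m by omega, dif_pos, h] at this ⊢
      omega
  refine ⟨(g, h), hg, hh, funext fun j => Fin.ext ?_⟩
  have hj := j.isLt
  calc (interleaveTuple hlN (g, h) j : ℕ) = (interleave (snocSeq g) (consSeq h) j).toNat := rfl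
    _ = (interleave (fun i => altPartialSum (toSeq f) (2 * i + 1))
          (fun i => -altPartialSum (toSeq f) (2 * i)) j).toNat := by
      rw [interleave, interleave, hsnoc _ (by omega), hcons _ (by omega)]
    _ = f j := by rw [interleave_altPartialSum, toSeq_of_lt f j.isLt]; simp

end Decomposition

theorem card_strictMono_altPartialSum_eq_choose_mul_choose (m N l : ℕ) (hlN : l < N) :
    #{f : Fin (2 * m + 1) → Fin N | StrictMono f ∧ altPartialSum (toSeq f) (2 * m + 1) = l} =
      l.choose m * (N - l - 1).choose m := by
  rw [← card_filter_strictMono m l, ← card_filter_strictMono m (N - l - 1), ← card_product]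
  symm
  refine card_nbij (interleaveTuple hlN) (fun p hp => ?_) (interleaveTuple_injective hlN).injOn
    (fun f hf => ?_)
  · simp only [coe_product, Set.mem_prod, coe_filter, mem_univ, true_and, Set.mem_ofPred_eq] at hp
    simpa using ⟨strictMono_interleaveTuple hlN p hp.1 hp.2, altPartialSum_interleaveTuple_eq hlN p⟩
  · simp only [coe_filter, mem_univ, true_and, Set.mem_ofPred_eq] at hf
    obtain ⟨p, hg, hh, rfl⟩ := exists_interleaveTuple_eq hf.1 hf.2 hlN
    exact ⟨p, by simpa using ⟨hg, hh⟩, rfl⟩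

/-- `#D_{2k-1}(l) = C(l, k-1) · C(N-l-1, k-1)`. -/
theorem stmt_7 (N k l : ℕ) (hN : 1 ≤ N) (hk : 1 ≤ k) (hl : l ≤ N - 1) :
    (Finset.univ.filter (fun f : Fin (2 * k - 1) → Fin N =>
        StrictMono f ∧
          ∑ j : Fin (2 * k - 1), (-1 : ℤ) ^ (j : ℕ) * ((f j : ℕ) : ℤ) = (l : ℤ))).card
      = Nat.choose l (k - 1) * Nat.choose (N - l - 1) (k - 1) := by
  obtain ⟨m, rfl⟩ : ∃ m, k = m + 1 := ⟨k - 1, by omega⟩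
  rw [show 2 * (m + 1) - 1 = 2 * m + 1 by omega, Nat.add_sub_cancel]
  simp only [sum_eq_altPartialSum_toSeq]
  exact card_strictMono_altPartialSum_eq_choose_mul_choose m N l (by omega)
end

section
/- The expansion F^E[u](z) = I + Σ_{l=0}^{N-1} E_N(-2l, z) · Σ_{d=1}^{N} (1/N)^d Σ_{(n_1,...,n_d) ∈ D_d(l)} U_{n_d}···U_{n_1} holds, where the ordered product over strictly increasing multi-indices is stratified by the alternating sum l = n_d - n_{d-1} + ... + (-1)^{d-1} n_1. -/
open Complex Matrix Finset

noncomputable def ENmat (N : ℕ) (n : ℤ) (z : ℝ) : Matrix (Fin 2) (Fin 2) ℂ :=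
  !![Complex.exp (Real.pi * I * n * z / N), 0; 0, Complex.exp (-(Real.pi * I * n * z / N))]

def Umat (w : ℂ) : Matrix (Fin 2) (Fin 2) ℂ := !![0, w; -(starRingEnd ℂ) w, 0]

noncomputable def LG (N : ℕ) (u : ℕ → ℂ) (n : ℕ) (z : ℝ) : Matrix (Fin 2) (Fin 2) ℂ :=
  ENmat N (-2 * n) z * Umat (u n)

noncomputable def FE (N : ℕ) (u : ℕ → ℂ) (z : ℝ) : Matrix (Fin 2) (Fin 2) ℂ :=
  ((List.range N).reverse.map (fun n => (1 : Matrix (Fin 2) (Fin 2) ℂ) + (1 / N : ℂ) • LG N u n z)).prod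

/-!
Multiplying out the ordered product `∏_{n=N-1}^{0} (1 + L_n / N)` gives one term
`N^{-d} L_{n_d} ⋯ L_{n_1}` for each strictly increasing tuple `n_1 < ⋯ < n_d`. Since
`U_n E_N(a) = E_N(-a) U_n`, every diagonal factor `E_N(-2 n_k)` can be moved to the far left,
each crossing of a `U` flipping the sign of the exponent collected so far; the total phase is
`E_N(-2 l)` with `l = n_d - n_{d-1} + ⋯ ± n_1`. For a strictly increasing tuple this alternating
sum satisfies `0 ≤ l ≤ n_d < N`, so grouping the terms by `l` gives the stratified expansion.
-/

namespace List

theorem prod_map_one_add {R ι : Type*} [Semiring R] (A : ι → R) (l : List ι) :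
    (l.map fun i => 1 + A i).prod = (l.sublists'.map fun t => (t.map A).prod).sum := by
  induction l with
  | nil => simp
  | cons a l ih =>
    simp only [map_cons, prod_cons, ih, sublists'_cons, map_append, sum_append, map_map,
      add_mul, one_mul, sum_map_add, ← sum_map_mul_left]
    rfl

theorem sublist_range_iff {t : List ℕ} {N : ℕ} :
    t <+ range N ↔ t.Pairwise (· < ·) ∧ ∀ x ∈ t, x < N := by
  refine ⟨fun h => ⟨pairwise_lt_range.sublist h, fun x hx => mem_range.1 (h.subset hx)⟩,
    fun ⟨hs, hN⟩ => ?_⟩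
  exact sublist_of_subperm_of_pairwise
    (subperm_of_subset hs.nodup fun x hx => mem_range.2 (hN x hx)) hs pairwise_lt_range

theorem sum_map_sublists_range {M : Type*} [AddCommMonoid M] (N : ℕ) (g : List ℕ → M) :
    ((range N).sublists.map g).sum =
      ∑ d ∈ Finset.range (N + 1), ∑ f ∈ univ.filter (fun f : Fin d → Fin N => StrictMono f),
        g (ofFn fun j => (f j : ℕ)) := by
  rw [Finset.sum_sigma', ← sum_toFinset g (nodup_sublists.2 nodup_range), ← Finset.sum_image
    (g := fun p : (d : ℕ) × (Fin d → Fin N) => ofFn fun j => (p.2 j : ℕ))]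
  · congr 1
    ext t
    simp only [mem_toFinset, mem_sublists, sublist_range_iff, Finset.mem_image, Finset.mem_sigma,
      Finset.mem_range, Finset.mem_filter, Finset.mem_univ, true_and, Sigma.exists]
    constructor
    · rintro ⟨hs, hN⟩
      refine ⟨t.length, fun j => ⟨t[j], hN _ (getElem_mem _)⟩, ⟨?_, ?_⟩, ?_⟩
      · exact Nat.lt_succ_of_le ((sublist_range_iff.2 ⟨hs, hN⟩).length_le.trans_eq length_range)
      · exact fun i j hij => Fin.mk_lt_mk.2 (pairwise_iff_getElem.1 hs i j i.2 j.2 hij)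
      · simp
    · rintro ⟨d, f, ⟨-, hf⟩, rfl⟩
      exact ⟨pairwise_ofFn.2 fun i j hij => hf hij, by simp [mem_ofFn]⟩
  · rintro ⟨d, f⟩ - ⟨d', f'⟩ - h
    have h' : (ofFn f).map Fin.val = (ofFn f').map Fin.val := by
      simpa only [map_ofFn, Function.comp_def] using h
    exact ofFn_inj'.1 (map_injective_iff.2 Fin.val_injective h')

theorem prod_map_reverse_range_one_add {R : Type*} [Semiring R] (N : ℕ) (A : ℕ → R) :
    ((range N).reverse.map fun n => 1 + A n).prod =
      ∑ d ∈ Finset.range (N + 1), ∑ f ∈ univ.filter (fun f : Fin d → Fin N => StrictMono f),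
        ((ofFn fun j => (f j : ℕ)).reverse.map A).prod := by
  rw [prod_map_one_add, sublists'_reverse, map_map, sum_map_sublists_range]
  rfl

theorem alternatingSum_mem_Icc {G : Type*} [AddCommGroup G] [LinearOrder G]
    [IsOrderedAddMonoid G] {l : List G} {b : G} (hl : l.Pairwise (· ≥ ·)) (hb : 0 ≤ b)
    (h : ∀ x ∈ l, x ∈ Set.Icc 0 b) : l.alternatingSum ∈ Set.Icc 0 b := by
  induction l generalizing b with
  | nil => simpa using hb
  | cons a t ih =>
    rw [pairwise_cons] at hl
    have ha := h a mem_cons_self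
    have ht := ih hl.2 ha.1 fun x hx => ⟨(h x (mem_cons_of_mem a hx)).1, hl.1 x hx⟩
    rw [alternatingSum_cons]
    exact ⟨sub_nonneg.2 ht.2, (sub_le_self a ht.1).trans ha.2⟩

end List

theorem Finset.sum_range_sum_filter_eq_sum {ι M : Type*} [AddCommMonoid M] {s : Finset ι}
    {N : ℕ} {g : ι → ℤ} (hg : ∀ i ∈ s, g i ∈ Set.Ico 0 (N : ℤ)) (F : ι → M) :
    ∑ l ∈ range N, ∑ i ∈ s with g i = l, F i = ∑ i ∈ s, F i := by
  rw [← sum_fiberwise_of_maps_to (g := fun i => (g i).toNat) (t := range N)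
    fun i hi => mem_range.2 (by obtain ⟨h0, hN⟩ := hg i hi; omega)]
  refine sum_congr rfl fun l _ => sum_congr (filter_congr fun i hi => ?_) fun _ _ => rfl
  obtain ⟨h0, hN⟩ := hg i hi
  omega

theorem sum_neg_one_pow_mul_eq_alternatingSum_reverse_ofFn {d : ℕ} (x : Fin d → ℤ) :
    ∑ j : Fin d, (-1) ^ (d - 1 - (j : ℕ)) * x j = (List.ofFn x).reverse.alternatingSum := by
  induction d with
  | zero => simp
  | succ d ih =>
    rw [Fin.sum_univ_castSucc, List.ofFn_succ', List.concat_eq_append, List.reverse_append,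
      List.reverse_singleton, List.singleton_append, List.alternatingSum_cons, ← ih]
    simp only [Fin.val_last, Fin.val_castSucc, Nat.add_sub_cancel, Nat.sub_self, pow_zero, one_mul]
    have hsign (j : Fin d) : (-1 : ℤ) ^ (d - (j : ℕ)) = -(-1) ^ (d - 1 - (j : ℕ)) := by
      rw [show d - (j : ℕ) = d - 1 - j + 1 by omega, pow_succ, mul_neg_one]
    simp only [hsign, neg_mul, Finset.sum_neg_distrib]
    abel

theorem sum_neg_one_pow_mul_mem_Ico_of_strictMono {d N : ℕ} (hN : 0 < N) {f : Fin d → Fin N}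
    (hf : StrictMono f) :
    ∑ j : Fin d, (-1 : ℤ) ^ (d - 1 - (j : ℕ)) * ((f j : ℕ) : ℤ) ∈ Set.Ico 0 (N : ℤ) := by
  rw [sum_neg_one_pow_mul_eq_alternatingSum_reverse_ofFn]
  have hdec : (List.ofFn fun j => ((f j : ℕ) : ℤ)).reverse.Pairwise (· ≥ ·) :=
    List.pairwise_reverse.2 (List.pairwise_ofFn.2 fun i j hij => by exact_mod_cast (hf hij).le)
  have hmem :
      ∀ x ∈ (List.ofFn fun j => ((f j : ℕ) : ℤ)).reverse, x ∈ Set.Icc 0 ((N : ℤ) - 1) := by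
    simp only [List.mem_reverse, List.mem_ofFn, forall_exists_index]
    rintro _ j rfl
    have := (f j).isLt
    constructor <;> omega
  have := List.alternatingSum_mem_Icc hdec (by omega) hmem
  exact ⟨this.1, by linarith [this.2]⟩

theorem ENmat_zero (N : ℕ) (z : ℝ) : ENmat N 0 z = 1 := by
  simp [ENmat, one_fin_two]

theorem ENmat_mul (N : ℕ) (a b : ℤ) (z : ℝ) :
    ENmat N a z * ENmat N b z = ENmat N (a + b) z := by
  rw [ENmat, ENmat, ENmat, mul_fin_two]
  simp only [mul_zero, zero_mul, add_zero, zero_add, ← Complex.exp_add]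
  push_cast
  ring_nf

theorem Umat_mul_ENmat (N : ℕ) (a : ℤ) (z : ℝ) (w : ℂ) :
    Umat w * ENmat N a z = ENmat N (-a) z * Umat w := by
  rw [ENmat, ENmat, Umat, mul_fin_two, mul_fin_two]
  simp only [mul_zero, zero_mul, add_zero, zero_add, Int.cast_neg, neg_mul]
  ring_nf

theorem prod_map_LG (N : ℕ) (u : ℕ → ℂ) (z : ℝ) (t : List ℕ) :
    (t.map fun n => LG N u n z).prod =
      ENmat N (-2 * (t.map ((↑) : ℕ → ℤ)).alternatingSum) z * (t.map fun n => Umat (u n)).prod := by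
  induction t with
  | nil => simp [ENmat_zero]
  | cons a t ih =>
    rw [List.map_cons, List.prod_cons, ih, LG, mul_assoc, ← mul_assoc (Umat _), Umat_mul_ENmat,
      mul_assoc, ← mul_assoc, ENmat_mul]
    simp only [List.map_cons, List.alternatingSum_cons, List.prod_cons]
    ring_nf

theorem prod_map_smul_LG (N : ℕ) (u : ℕ → ℂ) (z : ℝ) (c : ℂ) {d : ℕ} (f : Fin d → Fin N) :
    ((List.ofFn fun j => (f j : ℕ)).reverse.map fun n => c • LG N u n z).prod =
      c ^ d • (ENmat N (-2 * ∑ j : Fin d, (-1 : ℤ) ^ (d - 1 - (j : ℕ)) * ((f j : ℕ) : ℤ)) z *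
        ((List.ofFn fun j => Umat (u (f j))).reverse).prod) := by
  have hsmul : ((List.ofFn fun j => (f j : ℕ)).reverse.map fun n => c • LG N u n z) =
      ((List.ofFn fun j => (f j : ℕ)).reverse.map fun n => LG N u n z).map (c • ·) := by
    rw [List.map_map]; rfl
  rw [hsmul, ← List.smul_prod, prod_map_LG, sum_neg_one_pow_mul_eq_alternatingSum_reverse_ofFn]
  simp only [List.length_reverse, List.length_ofFn, List.map_reverse, List.map_ofFn,
    Function.comp_def]

theorem sum_ENmat_mul_eq_sum_range {d N : ℕ} (hN : 0 < N) (z : ℝ)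
    (M : (Fin d → Fin N) → Matrix (Fin 2) (Fin 2) ℂ) :
    ∑ f ∈ univ.filter (fun f : Fin d → Fin N => StrictMono f),
        ENmat N (-2 * ∑ j : Fin d, (-1 : ℤ) ^ (d - 1 - (j : ℕ)) * ((f j : ℕ) : ℤ)) z * M f =
      ∑ l ∈ range N, ENmat N (-2 * l) z * ∑ f ∈ univ.filter (fun f : Fin d → Fin N =>
        StrictMono f ∧ ∑ j : Fin d, (-1 : ℤ) ^ (d - 1 - (j : ℕ)) * ((f j : ℕ) : ℤ) = l), M f := by
  rw [← sum_range_sum_filter_eq_sum fun f hf =>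
    sum_neg_one_pow_mul_mem_Ico_of_strictMono hN (mem_filter.1 hf).2]
  refine sum_congr rfl fun l _ => ?_
  rw [mul_sum, filter_filter]
  exact sum_congr rfl fun f hf => by rw [(mem_filter.1 hf).2.2]

theorem stmt_18_general (N : ℕ) (u : ℕ → ℂ) (z : ℝ) :
    FE N u z
      = 1 + ∑ l ∈ Finset.range N, ENmat N (-2 * l) z *
          ∑ d ∈ Finset.Icc 1 N, ((1 / N : ℂ) ^ d) •
            ∑ f ∈ Finset.univ.filter (fun f : Fin d → Fin N =>
                StrictMono f ∧
                  ∑ j : Fin d, (-1 : ℤ) ^ (d - 1 - (j : ℕ)) * ((f j : ℕ) : ℤ) = (l : ℤ)),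
              ((List.ofFn (fun j : Fin d => Umat (u (f j)))).reverse).prod := by
  rw [FE, List.prod_map_reverse_range_one_add, sum_range_eq_add_Ico _ N.add_one_pos,
    Ico_add_one_right_eq_Icc]
  simp only [prod_map_smul_LG, ← smul_sum]
  congr 1
  · simp [ENmat_zero, Subsingleton.strictMono]
  · rw [sum_congr rfl fun d hd => by
      rw [sum_ENmat_mul_eq_sum_range (by have := mem_Icc.1 hd; omega)]]
    simp only [smul_sum, Matrix.mul_smul, mul_sum]
    exact sum_comm

/-- Stratified expansion of `F^E[u](z)` over the strata `D_d(l)` given by the alternating sum;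
the inner matrix product `U_{n_d}···U_{n_1}` is taken in decreasing index order. -/
theorem stmt_18 (N : ℕ) (hN : 1 ≤ N) (u : ℕ → ℂ) (z : ℝ) :
    FE N u z
      = 1 + ∑ l ∈ Finset.range N, ENmat N (-2 * l) z *
          ∑ d ∈ Finset.Icc 1 N, ((1 / N : ℂ) ^ d) •
            ∑ f ∈ Finset.univ.filter (fun f : Fin d → Fin N =>
                StrictMono f ∧
                  ∑ j : Fin d, (-1 : ℤ) ^ (d - 1 - (j : ℕ)) * ((f j : ℕ) : ℤ) = (l : ℤ)),
              ((List.ofFn (fun j : Fin d => Umat (u (f j)))).reverse).prod :=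
  stmt_18_general N u z
end
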